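/- If G is a finite generating set of n-qubit Pauli strings whose real span (times i) is already closed under commutators and forms a simple Lie algebra, then every vertex of the frustration graph of G has the same degree; i.e. every P ∈ G anticommutes with the same number of other elements of G. -/

import Mathlib

open Matrix

/-- The four single-qubit Pauli matrices: `0 ↦ I`, `1 ↦ X`, `2 ↦ Y`, `3 ↦ Z`. -/
noncomputable def pauliMat (a : Fin 4) : Matrix (Fin 2) (Fin 2) ℂ :=
  if a = 0 then 1
  else if a = 1 then !![0, 1; 1, 0]
  else if a = 2 then !![0, -Complex.I; Complex.I, 0]
  else !![1, 0; 0, -1]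

/-- The `n`-qubit Pauli string indexed by `s : Fin n → Fin 4` (tensor product of
single-qubit Paulis, as a matrix with index set `Fin n → Fin 2`). -/
noncomputable def PauliString (n : ℕ) (s : Fin n → Fin 4) :
    Matrix (Fin n → Fin 2) (Fin n → Fin 2) ℂ :=
  fun i j => ∏ k, pauliMat (s k) (i k) (j k)
attribute [local instance] Classical.propDecidable
attribute [local instance 100] LieRing.ofAssociativeRing

/-- `A` and `B` anticommute (as Pauli strings). -/
def AntiComm (n : ℕ) (A B : Fin n → Fin 4) : Prop :=
  PauliString n A * PauliString n B = -(PauliString n B * PauliString n A)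

/-!
For `s ∈ G` consider the map sending `t` to the product string `s t` when `s` and `t`
anticommute, and fixing `t` otherwise. It is a symplectic transvection of the binary encoding
of Pauli strings, so it preserves anticommutation; since `span_ℝ (i G)` is closed under
brackets, `G` is closed under anticommuting products and the transvection permutes `G`.
Hence `r` and `s r` have the same degree in the frustration graph whenever `s ∈ G`
anticommutes with `r`. Consequently the strings of a given degree span (times `i`) a Lie ideal
of the simple Lie algebra `span_ℝ (i G)`, which must be everything, and linear independence
of Pauli strings brings this back to `G`.
-/

lemma Finset.prod_eq_or_eq_neg {ι M : Type*} [CommMonoid M] [HasDistribNeg M] (s : Finset ι)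
    {f g : ι → M} (h : ∀ i ∈ s, f i = g i ∨ f i = -g i) :
    ∏ i ∈ s, f i = ∏ i ∈ s, g i ∨ ∏ i ∈ s, f i = -∏ i ∈ s, g i := by
  induction s using Finset.cons_induction with
  | empty => simp
  | cons a s _ ih =>
    simp only [Finset.prod_cons]
    rcases h a (s.mem_cons_self a) with hfa | hfa <;>
      rcases ih fun i hi => h i (Finset.mem_cons_of_mem hi) with hfs | hfs <;>
      simp [hfa, hfs]

namespace Matrix

variable {ι R : Type*} {α β γ : ι → Type*} [Fintype ι] [CommSemiring R]

def piKronecker (M : ∀ k, Matrix (α k) (β k) R) : Matrix (∀ k, α k) (∀ k, β k) R :=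
  of fun i j => ∏ k, M k (i k) (j k)

@[simp]
lemma piKronecker_apply (M : ∀ k, Matrix (α k) (β k) R) (i : ∀ k, α k) (j : ∀ k, β k) :
    piKronecker M i j = ∏ k, M k (i k) (j k) := rfl

lemma piKronecker_mul [DecidableEq ι] [∀ k, Fintype (β k)] (M : ∀ k, Matrix (α k) (β k) R)
    (N : ∀ k, Matrix (β k) (γ k) R) :
    piKronecker M * piKronecker N = piKronecker fun k => M k * N k := by
  ext i j
  simp only [mul_apply, piKronecker_apply, ← Finset.prod_mul_distrib, Fintype.prod_sum]

lemma piKronecker_smul (c : ι → R) (M : ∀ k, Matrix (α k) (β k) R) :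
    piKronecker (fun k => c k • M k) = (∏ k, c k) • piKronecker M := by
  ext i j
  simp only [piKronecker_apply, smul_apply, smul_eq_mul, Finset.prod_mul_distrib]

lemma piKronecker_one [DecidableEq ι] [∀ k, DecidableEq (α k)] :
    piKronecker (fun k => (1 : Matrix (α k) (α k) R)) = 1 := by
  ext i j
  by_cases h : i = j
  · subst h; simp
  · obtain ⟨k, hk⟩ := Function.ne_iff.mp h
    rw [piKronecker_apply, one_apply_ne h]
    exact Finset.prod_eq_zero (Finset.mem_univ k) (one_apply_ne hk)

lemma trace_piKronecker [DecidableEq ι] [∀ k, Fintype (α k)]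
    (M : ∀ k, Matrix (α k) (α k) R) : trace (piKronecker M) = ∏ k, trace (M k) := by
  simp only [trace, diag_apply, piKronecker_apply, Fintype.prod_sum]

end Matrix

/- With `I, X, Y, Z` indexed by `0, 1, 2, 3`, i.e. by the bit pairs `00, 01, 10, 11`, the product
of two Pauli matrices is the one indexed by the bitwise xor, times this phase. -/
noncomputable def pauliPhase (a b : Fin 4) : ℂ :=
  if a = 0 ∨ b = 0 ∨ a = b then 1
  else if (a = 1 ∧ b = 2) ∨ (a = 2 ∧ b = 3) ∨ (a = 3 ∧ b = 1) then Complex.I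
  else -Complex.I

lemma pauliPhase_eq_or_eq_neg (a b : Fin 4) :
    pauliPhase a b = pauliPhase b a ∨ pauliPhase a b = -pauliPhase b a := by
  fin_cases a <;> fin_cases b <;> simp [pauliPhase]

lemma pauliMat_mul (a b : Fin 4) :
    pauliMat a * pauliMat b = pauliPhase a b • pauliMat (a ^^^ b) := by
  fin_cases a <;> fin_cases b <;>
    · ext i j
      fin_cases i <;> fin_cases j <;>
        simp [pauliMat, pauliPhase, mul_apply, Fin.sum_univ_two, one_apply]

lemma pauliMat_mul_self (a : Fin 4) : pauliMat a * pauliMat a = 1 := by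
  fin_cases a <;>
    · ext i j
      fin_cases i <;> fin_cases j <;> simp [pauliMat, mul_apply, Fin.sum_univ_two, one_apply]

lemma trace_pauliMat (a : Fin 4) : trace (pauliMat a) = if a = 0 then 2 else 0 := by
  fin_cases a <;> simp [pauliMat, trace, Fin.sum_univ_two]

namespace PauliString

open Complex (I)

variable {n : ℕ}

lemma eq_piKronecker (s : Fin n → Fin 4) :
    PauliString n s = piKronecker fun k => pauliMat (s k) := rfl

def mulIndex (s t : Fin n → Fin 4) : Fin n → Fin 4 := fun k => s k ^^^ t k

noncomputable def phase (s t : Fin n → Fin 4) : ℂ := ∏ k, pauliPhase (s k) (t k)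

lemma mulIndex_comm (s t : Fin n → Fin 4) : mulIndex s t = mulIndex t s :=
  funext fun _ => Fin.xor_comm _ _

lemma mulIndex_mulIndex_cancel_left (s t : Fin n → Fin 4) : mulIndex s (mulIndex s t) = t :=
  funext fun _ => (by decide : ∀ a b : Fin 4, a ^^^ (a ^^^ b) = b) _ _

lemma phase_eq_or_eq_neg (s t : Fin n → Fin 4) :
    phase s t = phase t s ∨ phase s t = -phase t s :=
  Finset.prod_eq_or_eq_neg _ fun _ _ => pauliPhase_eq_or_eq_neg _ _

lemma mul (s t : Fin n → Fin 4) :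
    PauliString n s * PauliString n t = phase s t • PauliString n (mulIndex s t) := by
  simp only [eq_piKronecker, piKronecker_mul, pauliMat_mul, piKronecker_smul, phase, mulIndex]

lemma mul_self (s : Fin n → Fin 4) : PauliString n s * PauliString n s = 1 := by
  simp only [eq_piKronecker, piKronecker_mul, pauliMat_mul_self, piKronecker_one]

lemma isUnit (s : Fin n → Fin 4) : IsUnit (PauliString n s) :=
  IsUnit.of_mul_eq_one _ (mul_self s)

lemma commute_or_antiComm (s t : Fin n → Fin 4) :
    Commute (PauliString n s) (PauliString n t) ∨ AntiComm n s t := by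
  rw [Commute, SemiconjBy, AntiComm, mul, mul, mulIndex_comm t s, ← neg_smul]
  rcases phase_eq_or_eq_neg s t with h | h <;> rw [h]
  · exact .inl rfl
  · exact .inr rfl

lemma not_antiComm_self (s : Fin n → Fin 4) : ¬AntiComm n s s := by
  intro h
  rw [AntiComm, mul_self] at h
  have := congr_fun₂ h 0 0
  norm_num at this

lemma antiComm_comm (s t : Fin n → Fin 4) : AntiComm n s t ↔ AntiComm n t s := by
  unfold AntiComm
  constructor <;> intro h <;> rw [h, neg_neg]

noncomputable def commSign (s t : Fin n → Fin 4) : ℂ := if AntiComm n s t then -1 else 1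

lemma commSign_eq_neg_one_iff {s t : Fin n → Fin 4} : commSign s t = -1 ↔ AntiComm n s t := by
  unfold commSign; split_ifs with h <;> norm_num [h]

lemma commSign_self (s : Fin n → Fin 4) : commSign s s = 1 := if_neg (not_antiComm_self s)

lemma commSign_comm (s t : Fin n → Fin 4) : commSign s t = commSign t s := by
  simp only [commSign, antiComm_comm s t]

lemma mul_comm_commSign (s t : Fin n → Fin 4) :
    PauliString n s * PauliString n t = commSign s t • (PauliString n t * PauliString n s) := by
  unfold commSign
  split_ifs with h
  · rw [neg_one_smul]; exact h
  · rw [one_smul]; exact ((commute_or_antiComm s t).resolve_right h).eq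

lemma commSign_mulIndex_left (s t r : Fin n → Fin 4) :
    commSign (mulIndex s t) r = commSign s r * commSign t r := by
  set S := PauliString n s
  set T := PauliString n t
  set R := PauliString n r
  have hRST : R * (S * T) ≠ 0 := ((isUnit r).mul ((isUnit s).mul (isUnit t))).ne_zero
  refine smul_left_injective ℂ hRST ?_
  calc commSign (mulIndex s t) r • (R * (S * T)) = S * T * R := by
        rw [mul s t, smul_mul_assoc, mul_comm_commSign, mul_smul_comm, smul_comm]
    _ = (commSign s r * commSign t r) • (R * (S * T)) := by
        rw [mul_assoc, mul_comm_commSign t r, mul_smul_comm, ← mul_assoc, mul_comm_commSign s r,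
          smul_mul_assoc, smul_smul, mul_comm, mul_assoc]

lemma commSign_mulIndex_right (s t r : Fin n → Fin 4) :
    commSign r (mulIndex s t) = commSign r s * commSign r t := by
  simp only [commSign_comm r, commSign_mulIndex_left]

/- In the binary symplectic picture of Pauli strings this is the transvection
`t ↦ t + ω(s, t) s`. -/
noncomputable def transvection (s t : Fin n → Fin 4) : Fin n → Fin 4 :=
  if AntiComm n s t then mulIndex s t else t

lemma transvection_of_antiComm {s t : Fin n → Fin 4} (h : AntiComm n s t) :
    transvection s t = mulIndex s t :=
  if_pos h

lemma commSign_transvection (s t r : Fin n → Fin 4) :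
    commSign (transvection s t) (transvection s r) = commSign t r := by
  unfold transvection
  split_ifs with ht hr hr <;>
    simp only [commSign_mulIndex_left, commSign_mulIndex_right, commSign_self,
      commSign_comm _ s] <;>
    simp only [commSign, ht, hr, if_true, if_false] <;> ring

lemma antiComm_transvection_iff {s t r : Fin n → Fin 4} :
    AntiComm n (transvection s t) (transvection s r) ↔ AntiComm n t r := by
  rw [← commSign_eq_neg_one_iff, commSign_transvection, commSign_eq_neg_one_iff]

lemma transvection_self (s : Fin n → Fin 4) : transvection s s = s :=
  if_neg (not_antiComm_self s)

lemma transvection_transvection (s t : Fin n → Fin 4) :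
    transvection s (transvection s t) = t := by
  by_cases hst : AntiComm n s t
  · have hs : AntiComm n s (mulIndex s t) := by
      have := (antiComm_transvection_iff (s := s) (t := s) (r := t)).mpr hst
      rwa [transvection_self, transvection, if_pos hst] at this
    simp only [transvection, if_pos hst, if_pos hs, mulIndex_mulIndex_cancel_left]
  · simp only [transvection, if_neg hst]

lemma card_filter_antiComm_transvection {G : Finset (Fin n → Fin 4)}
    (hG : ∀ s ∈ G, ∀ t ∈ G, AntiComm n s t → mulIndex s t ∈ G) {s : Fin n → Fin 4}
    (hs : s ∈ G) (r : Fin n → Fin 4) :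
    (G.filter fun t => AntiComm n t (transvection s r)).card =
      (G.filter fun t => AntiComm n t r).card := by
  have hmem : ∀ t ∈ G, transvection s t ∈ G := fun t ht => by
    unfold transvection; split_ifs with hst
    exacts [hG s hs t ht hst, ht]
  refine Finset.card_nbij' (transvection s) (transvection s) (fun t ht => ?_) (fun t ht => ?_)
    (fun t _ => transvection_transvection s t) (fun t _ => transvection_transvection s t)
  · rw [Finset.mem_coe, Finset.mem_filter] at ht ⊢
    refine ⟨hmem t ht.1, ?_⟩
    rw [← antiComm_transvection_iff (s := s), transvection_transvection]
    exact ht.2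
  · rw [Finset.mem_coe, Finset.mem_filter] at ht ⊢
    exact ⟨hmem t ht.1, antiComm_transvection_iff.mpr ht.2⟩

lemma trace_mul_of_ne {s t : Fin n → Fin 4} (h : s ≠ t) :
    trace (PauliString n s * PauliString n t) = 0 := by
  obtain ⟨k, hk⟩ := Function.ne_iff.mp h
  have hxor : s k ^^^ t k ≠ 0 := fun h0 =>
    hk ((by decide : ∀ a b : Fin 4, a ^^^ b = 0 → a = b) _ _ h0)
  rw [mul, trace_smul, eq_piKronecker, trace_piKronecker,
    Finset.prod_eq_zero (Finset.mem_univ k) ((trace_pauliMat _).trans (if_neg hxor)), smul_zero]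

lemma linearIndependent : LinearIndependent ℂ (PauliString n) := by
  rw [Fintype.linearIndependent_iff]
  intro g hg i
  have htr := congrArg (fun X => trace (X * PauliString n i)) hg
  simp only [Finset.sum_mul, trace_sum, smul_mul_assoc, trace_smul, zero_mul, trace_zero] at htr
  rw [Finset.sum_eq_single i (fun j _ hj => by rw [trace_mul_of_ne hj, smul_zero]) (by simp),
    mul_self, trace_one, smul_eq_mul, mul_eq_zero] at htr
  exact htr.resolve_right (by simp)

lemma linearIndependent_I_smul :
    LinearIndependent ℝ fun s : Fin n → Fin 4 => I • PauliString n s :=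
  (linearIndependent.units_smul fun _ => Units.mk0 I Complex.I_ne_zero).restrict_scalars' ℝ

noncomputable def skewSpan (A : Set (Fin n → Fin 4)) :
    Submodule ℝ (Matrix (Fin n → Fin 2) (Fin n → Fin 2) ℂ) :=
  Submodule.span ℝ ((fun s => I • PauliString n s) '' A)

lemma mem_of_I_smul_mem_skewSpan {A : Set (Fin n → Fin 4)} {s : Fin n → Fin 4}
    (h : I • PauliString n s ∈ skewSpan A) : s ∈ A := by
  by_contra hs
  exact linearIndependent_I_smul.notMem_span_image hs h

lemma phase_sq_of_antiComm {s t : Fin n → Fin 4} (h : AntiComm n s t) : phase s t ^ 2 = -1 := by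
  set S := PauliString n s
  set T := PauliString n t
  have hTS : T * S = -(S * T) := (antiComm_comm s t).mp h
  have hST : S * T * (S * T) = -1 :=
    calc S * T * (S * T) = S * (T * S) * T := by simp only [mul_assoc]
      _ = -(S * S * (T * T)) := by rw [hTS]; noncomm_ring
      _ = -1 := by rw [mul_self, mul_self, one_mul]
  have hsq : phase s t ^ 2 • (1 : Matrix (Fin n → Fin 2) (Fin n → Fin 2) ℂ) =
      (-1 : ℂ) • 1 := by
    rw [neg_one_smul, ← hST, mul, smul_mul_smul_comm, mul_self, sq]
  exact smul_left_injective ℂ one_ne_zero hsq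

lemma lie_I_smul_of_antiComm {s t : Fin n → Fin 4} (h : AntiComm n s t) :
    ∃ r : ℝ, r ≠ 0 ∧ ⁅I • PauliString n s, I • PauliString n t⁆ =
      r • (I • PauliString n (mulIndex s t)) := by
  have hTS : PauliString n t * PauliString n s = -(PauliString n s * PauliString n t) :=
    (antiComm_comm s t).mp h
  have hlie : ⁅I • PauliString n s, I • PauliString n t⁆ =
      (-2 * phase s t) • PauliString n (mulIndex s t) := by
    rw [smul_lie, lie_smul, Ring.lie_def, hTS, mul s t, smul_smul, Complex.I_mul_I]
    module
  rcases sq_eq_sq_iff_eq_or_eq_neg.mp ((phase_sq_of_antiComm h).trans Complex.I_sq.symm)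
    with hphase | hphase
  · refine ⟨-2, by norm_num, ?_⟩
    rw [hlie, hphase, ← Complex.coe_smul, smul_smul]
    push_cast; ring_nf
  · refine ⟨2, by norm_num, ?_⟩
    rw [hlie, hphase, ← Complex.coe_smul, smul_smul]
    push_cast; ring_nf

lemma lie_I_smul_of_not_antiComm {s t : Fin n → Fin 4} (h : ¬AntiComm n s t) :
    ⁅I • PauliString n s, I • PauliString n t⁆ = 0 := by
  rw [smul_lie, lie_smul, Ring.lie_def, ((commute_or_antiComm s t).resolve_right h).eq, sub_self,
    smul_zero, smul_zero]

lemma lie_mem_skewSpan {A B : Set (Fin n → Fin 4)}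
    (hAB : ∀ s ∈ A, ∀ t ∈ B, AntiComm n s t → mulIndex s t ∈ B)
    {x y : Matrix (Fin n → Fin 2) (Fin n → Fin 2) ℂ} (hx : x ∈ skewSpan A)
    (hy : y ∈ skewSpan B) : ⁅x, y⁆ ∈ skewSpan B := by
  have hmap₂ := Submodule.apply_mem_map₂ (LieAlgebra.ad ℝ _).toLinearMap hx hy
  rw [skewSpan, skewSpan, Submodule.map₂_span_span] at hmap₂
  refine Submodule.span_le.mpr ?_ hmap₂
  rintro _ ⟨_, ⟨s, hs, rfl⟩, _, ⟨t, ht, rfl⟩, rfl⟩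
  change ⁅I • PauliString n s, I • PauliString n t⁆ ∈ skewSpan B
  by_cases hst : AntiComm n s t
  · obtain ⟨r, -, hr⟩ := lie_I_smul_of_antiComm hst
    rw [hr]
    exact Submodule.smul_mem _ r (Submodule.subset_span ⟨_, hAB s hs t ht hst, rfl⟩)
  · rw [lie_I_smul_of_not_antiComm hst]
    exact zero_mem _

section LieSubalgebra

variable {G : Set (Fin n → Fin 4)}
  {L : LieSubalgebra ℝ (Matrix (Fin n → Fin 2) (Fin n → Fin 2) ℂ)}

lemma I_smul_mem_of_eq_skewSpan
    (hL : (L : Set (Matrix (Fin n → Fin 2) (Fin n → Fin 2) ℂ)) = skewSpan G)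
    {s : Fin n → Fin 4} (hs : s ∈ G) : I • PauliString n s ∈ L := by
  rw [← SetLike.mem_coe, hL]
  exact Submodule.subset_span ⟨s, hs, rfl⟩

lemma mulIndex_mem_of_eq_skewSpan
    (hL : (L : Set (Matrix (Fin n → Fin 2) (Fin n → Fin 2) ℂ)) = skewSpan G)
    {s t : Fin n → Fin 4} (hs : s ∈ G) (ht : t ∈ G) (hst : AntiComm n s t) :
    mulIndex s t ∈ G := by
  obtain ⟨r, hr, hlie⟩ := lie_I_smul_of_antiComm hst
  have hmem := L.lie_mem (I_smul_mem_of_eq_skewSpan hL hs) (I_smul_mem_of_eq_skewSpan hL ht)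
  rw [← SetLike.mem_coe, hL, SetLike.mem_coe, hlie, Submodule.smul_mem_iff _ hr] at hmem
  exact mem_of_I_smul_mem_skewSpan hmem

lemma eq_of_isSimple [LieAlgebra.IsSimple ℝ L]
    (hL : (L : Set (Matrix (Fin n → Fin 2) (Fin n → Fin 2) ℂ)) = skewSpan G)
    {A : Set (Fin n → Fin 4)} (hAG : A ⊆ G) (hA : A.Nonempty)
    (hGA : ∀ s ∈ G, ∀ t ∈ A, AntiComm n s t → mulIndex s t ∈ A) : A = G := by
  let J : LieIdeal ℝ L :=
    { toSubmodule := (skewSpan A).comap L.toSubmodule.subtype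
      lie_mem := fun {x y} hy => by
        have hx : (x : Matrix (Fin n → Fin 2) (Fin n → Fin 2) ℂ) ∈ skewSpan G := by
          rw [← SetLike.mem_coe, ← hL]; exact x.2
        exact lie_mem_skewSpan hGA hx hy }
  have hJ : ∀ s (h : s ∈ G), (⟨_, I_smul_mem_of_eq_skewSpan hL h⟩ : L) ∈ J ↔ s ∈ A :=
    fun s _ => ⟨mem_of_I_smul_mem_skewSpan, fun h => Submodule.subset_span ⟨s, h, rfl⟩⟩
  obtain ⟨a, ha⟩ := hA
  rcases LieAlgebra.IsSimple.eq_bot_or_eq_top J with hbot | htop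
  · have h0 := (hJ a (hAG ha)).mpr ha
    rw [hbot, LieSubmodule.mem_bot] at h0
    exact (linearIndependent_I_smul.ne_zero a (congrArg Subtype.val h0)).elim
  · exact hAG.antisymm fun s hs => (hJ s hs).mp (htop ▸ LieSubmodule.mem_top _)

end LieSubalgebra

end PauliString

/-- If the real span of `i·G` is already a (Lie-bracket-closed) simple real Lie algebra,
then the frustration graph of `G` is regular: every `P ∈ G` anticommutes with the same
number of elements of `G`. -/
theorem frustration_graph_regular (n : ℕ) (G : Finset (Fin n → Fin 4))
    (L : LieSubalgebra ℝ (Matrix (Fin n → Fin 2) (Fin n → Fin 2) ℂ))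
    (hL : (L : Set (Matrix (Fin n → Fin 2) (Fin n → Fin 2) ℂ)) =
      (Submodule.span ℝ
        ((fun s => Complex.I • PauliString n s) '' (G : Set (Fin n → Fin 4))) :
          Submodule ℝ (Matrix (Fin n → Fin 2) (Fin n → Fin 2) ℂ)))
    (hsimple : LieAlgebra.IsSimple ℝ L)
    (P Q : Fin n → Fin 4) (hP : P ∈ G) (hQ : Q ∈ G) :
    (G.filter (fun R => AntiComm n R P)).card =
      (G.filter (fun R => AntiComm n R Q)).card := by
  have hclosed : ∀ s ∈ G, ∀ t ∈ G, AntiComm n s t → PauliString.mulIndex s t ∈ G :=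
    fun s hs t ht => PauliString.mulIndex_mem_of_eq_skewSpan hL hs ht
  let A : Set (Fin n → Fin 4) := {R | R ∈ G ∧
    (G.filter fun T => AntiComm n T R).card = (G.filter fun T => AntiComm n T P).card}
  have hA : A = G := by
    refine PauliString.eq_of_isSimple hL (fun R hR => hR.1) ⟨P, hP, rfl⟩ ?_
    intro s hs t ⟨ht, hdeg⟩ hst
    refine ⟨hclosed s hs t ht hst, ?_⟩
    rw [← PauliString.transvection_of_antiComm hst,
      PauliString.card_filter_antiComm_transvection hclosed hs, hdeg]
  have hQA : Q ∈ A := hA ▸ hQ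
  exact hQA.2.symm
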